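/- arXiv:1712.09927 — 2 statements merged into one kernel-verified Lean document; each statement's English description precedes it below -/
import Mathlib

section
/- Let C ⊂ ℚ^{n+1} be a full-dimensional pointed rational polyhedral cone with primitive ray generators w_1, …, w_s, and suppose C is Gorenstein, i.e., there exists a (unique) lattice point u ∈ ℤ^{n+1} in the interior of C with C° ∩ ℤ^{n+1} = u + (C ∩ ℤ^{n+1}). Then u can be written as u = Σ_i λ_i w_i with 0 ≤ λ_i ≤ 1 for all i such that the set {w_i : λ_i ≠ 0} is linearly independent. -/
/-!
By conic Carathéodory, `u` is a nonnegative combination `∑ λ_i w_i` whose support is linearly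
independent: a linear dependence among the generators in use lets one slide the coefficients
along it until one of them vanishes. If some `λ_i > 1`, then `u - λ_i w_i ∈ C`, and `u - w_i` lies
on the open segment from the interior point `u` to it, so `u - w_i ∈ C°`. The Gorenstein
condition then puts `(u - w_i) - u = -w_i` in `C`; pointedness forces `w_i = 0`, which is not
primitive.
-/

open Function

variable {𝕜 V ι : Type*} [AddCommGroup V] [Fintype ι]

section ConicHull

variable [Ring 𝕜] [PartialOrder 𝕜] [Module 𝕜 V]

variable (𝕜) in
def conicHull (v : ι → V) : Set V :=
  {x | ∃ t : ι → 𝕜, (∀ i, 0 ≤ t i) ∧ x = ∑ i, t i • v i}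

namespace conicHull

variable {v : ι → V}

theorem sum_sub_smul_mem {t : ι → 𝕜} (ht : ∀ i, 0 ≤ t i) (i : ι) :
    ∑ j, t j • v j - t i • v i ∈ conicHull 𝕜 v := by
  classical
  refine ⟨update t i 0, fun j => ?_, ?_⟩
  · by_cases h : j = i <;> simp [h, ht j]
  · simp [update_apply, ite_smul, Finset.sum_ite, Finset.filter_ne']

variable [IsOrderedRing 𝕜]

theorem apply_mem (i : ι) : v i ∈ conicHull 𝕜 v := by
  classical
  exact ⟨Pi.single i 1, fun j => by by_cases h : j = i <;> simp [h], by simp [Pi.single_apply]⟩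

theorem convex : Convex 𝕜 (conicHull 𝕜 v) := by
  rintro _ ⟨a, ha, rfl⟩ _ ⟨b, hb, rfl⟩ p q hp hq -
  refine ⟨fun i => p * a i + q * b i,
    fun i => add_nonneg (mul_nonneg hp (ha i)) (mul_nonneg hq (hb i)), ?_⟩
  simp only [add_smul, mul_smul, Finset.sum_add_distrib, Finset.smul_sum]

end conicHull

end ConicHull

variable [Field 𝕜] [LinearOrder 𝕜] [IsStrictOrderedRing 𝕜] [Module 𝕜 V] {v : ι → V}

theorem exists_support_ssubset_of_sum_smul_eq_zero {t d : ι → 𝕜} (ht : ∀ i, 0 ≤ t i)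
    (hd : ∑ i, d i • v i = 0) (hdt : support d ⊆ support t) (hpos : ∃ i, 0 < d i) :
    ∃ t' : ι → 𝕜, (∀ i, 0 ≤ t' i) ∧ ∑ i, t' i • v i = ∑ i, t i • v i ∧
      support t' ⊂ support t := by
  classical
  obtain ⟨i₀, hi₀⟩ := hpos
  obtain ⟨k, hk, hmin⟩ := Finset.exists_min_image (Finset.univ.filter fun i => 0 < d i)
    (fun i => t i / d i) ⟨i₀, by simpa using hi₀⟩
  simp only [Finset.mem_filter, Finset.mem_univ, true_and] at hk hmin
  -- `μ` is the largest step along `-d` that keeps `t` nonnegative; it kills the coordinate `k`.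
  set μ := t k / d k
  have hμ : 0 ≤ μ := div_nonneg (ht k) hk.le
  refine ⟨t - μ • d, fun i => ?_, ?_, ?_⟩
  · rcases le_or_gt (d i) 0 with hdi | hdi
    · simp only [Pi.sub_apply, Pi.smul_apply, smul_eq_mul]
      nlinarith [ht i]
    · simpa [sub_nonneg] using (le_div_iff₀ hdi).1 (hmin i hdi)
  · simp [sub_smul, Finset.sum_sub_distrib, mul_smul, ← Finset.smul_sum, hd]
  · have hsub : support (t - μ • d) ⊆ support t := fun i hi hti => by
      have hdi : d i = 0 := not_not.1 fun h => hdt h hti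
      simp_all
    refine (Set.ssubset_iff_of_subset hsub).2 ⟨k, hdt hk.ne', ?_⟩
    simp [μ, hk.ne']

theorem exists_support_ssubset_of_not_linearIndepOn {t : ι → 𝕜} (ht : ∀ i, 0 ≤ t i)
    (hli : ¬LinearIndepOn 𝕜 v (support t)) :
    ∃ t' : ι → 𝕜, (∀ i, 0 ≤ t' i) ∧ ∑ i, t' i • v i = ∑ i, t i • v i ∧
      support t' ⊂ support t := by
  classical
  rw [← Set.coe_toFinset (support t), not_linearIndepOn_finset_iff] at hli
  obtain ⟨f, hf, k, hk, hfk⟩ := hli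
  set d : ι → 𝕜 := fun i => if t i ≠ 0 then f i else 0
  have hd : ∑ i, d i • v i = 0 := by
    simp only [d, ite_smul, zero_smul]
    rw [← Finset.sum_filter, ← hf]
    congr 1
    ext; simp
  have hdt : support d ⊆ support t := fun i hi hti => hi (by simp [d, hti])
  have hdk : d k ≠ 0 := by simp_all [d]
  rcases hdk.lt_or_gt with hneg | hpos
  · exact exists_support_ssubset_of_sum_smul_eq_zero (d := -d) ht
      (by simp [neg_smul, hd]) (by rwa [support_neg]) ⟨k, neg_pos.2 hneg⟩
  · exact exists_support_ssubset_of_sum_smul_eq_zero ht hd hdt ⟨k, hpos⟩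

theorem exists_linearIndepOn_support_of_nonneg (t : ι → 𝕜) (ht : ∀ i, 0 ≤ t i) :
    ∃ lam : ι → 𝕜, (∀ i, 0 ≤ lam i) ∧ ∑ i, lam i • v i = ∑ i, t i • v i ∧
      LinearIndepOn 𝕜 v (support lam) := by
  induction hn : (support t).ncard using Nat.strong_induction_on generalizing t with
  | _ n ih =>
    by_cases hli : LinearIndepOn 𝕜 v (support t)
    · exact ⟨t, ht, rfl, hli⟩
    obtain ⟨t', ht', hsum, hsub⟩ := exists_support_ssubset_of_not_linearIndepOn ht hli
    obtain ⟨lam, hlam, hsum', hli'⟩ := ih _ (hn ▸ Set.ncard_lt_ncard hsub) t' ht' rfl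
    exact ⟨lam, hlam, hsum'.trans hsum, hli'⟩

theorem sub_mem_interior_of_sub_smul_mem {E : Type*} [AddCommGroup E] [Module 𝕜 E]
    [TopologicalSpace E] [IsTopologicalAddGroup E] [ContinuousConstSMul 𝕜 E] {C : Set E}
    (hC : Convex 𝕜 C) {u w : E} {c : 𝕜} (hu : u ∈ interior C) (hc : 1 < c)
    (h : u - c • w ∈ C) : u - w ∈ interior C := by
  have hc0 : c ≠ 0 := by positivity
  -- `u - w = (1 - c⁻¹) • u + c⁻¹ • (u - c • w)`
  convert hC.combo_interior_self_mem_interior hu h (sub_pos.2 (inv_lt_one_of_one_lt₀ hc))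
    (by positivity) (sub_add_cancel 1 c⁻¹) using 1
  rw [smul_sub, smul_smul, inv_mul_cancel₀ hc0]
  module

theorem stmt_6_general {n s : ℕ} (w : Fin s → (Fin (n + 1) → ℤ))
    (hprim : ∀ i, Finset.univ.gcd (fun j => w i j) = 1)
    (C : Set (Fin (n + 1) → ℚ))
    (hC : C = {x | ∃ t : Fin s → ℚ, (∀ i, 0 ≤ t i) ∧
        x = ∑ i, t i • (fun j => ((w i j : ℚ)))})
    (hpointed : ∀ x ∈ C, -x ∈ C → x = 0)
    (u : Fin (n + 1) → ℤ)
    (hu : (fun j => (u j : ℚ)) ∈ interior C)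
    (hGor : ∀ x : Fin (n + 1) → ℤ,
      ((fun j => (x j : ℚ)) ∈ interior C ↔
        (fun j => ((x j - u j : ℤ) : ℚ)) ∈ C)) :
    ∃ lam : Fin s → ℚ, (∀ i, 0 ≤ lam i ∧ lam i ≤ 1) ∧
      (fun j => (u j : ℚ)) = ∑ i, lam i • (fun j => (w i j : ℚ)) ∧
      LinearIndependent ℚ
        (fun i : {i : Fin s // lam i ≠ 0} => (fun j => (w i.1 j : ℚ))) := by
  set wQ : Fin s → Fin (n + 1) → ℚ := fun i j => (w i j : ℚ)
  replace hC : C = conicHull ℚ wQ := hC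
  subst hC
  obtain ⟨t, ht, hut⟩ := interior_subset hu
  obtain ⟨lam, hlam, hsum, hli⟩ := exists_linearIndepOn_support_of_nonneg t ht (v := wQ)
  refine ⟨lam, fun i => ⟨hlam i, ?_⟩, hut.trans hsum.symm, hli⟩
  by_contra! hgt
  have hint := sub_mem_interior_of_sub_smul_mem conicHull.convex hu hgt
    (hut ▸ hsum ▸ conicHull.sum_sub_smul_mem hlam i)
  have hneg : -wQ i ∈ conicHull ℚ wQ := by
    convert (hGor (u - w i)).1 (by convert hint using 1; ext; simp [wQ]) using 1
    ext; simp [wQ]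
  have hwi : wQ i = 0 := hpointed _ (conicHull.apply_mem i) hneg
  have : Finset.univ.gcd (w i) = 0 :=
    Finset.gcd_eq_zero_iff.2 fun j _ => by simpa [wQ] using congrFun hwi j
  simp [hprim i] at this

/-- key step of Lemma 4.1. Let `C ⊆ ℚ^{n+1}` be a
full-dimensional pointed rational polyhedral cone with primitive ray generators
`w_1, …, w_s`, and suppose `C` is Gorenstein: there is a lattice point `u` in
the interior of `C` with `C° ∩ ℤ^{n+1} = u + (C ∩ ℤ^{n+1})`.  Then
`u = ∑ λ_i w_i` with `0 ≤ λ_i ≤ 1` and `{w_i : λ_i ≠ 0}` linearly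
independent. -/
theorem stmt_6 {n s : ℕ} (w : Fin s → (Fin (n + 1) → ℤ))
    (hprim : ∀ i, Finset.univ.gcd (fun j => w i j) = 1)
    (C : Set (Fin (n + 1) → ℚ))
    (hC : C = {x | ∃ t : Fin s → ℚ, (∀ i, 0 ≤ t i) ∧
        x = ∑ i, t i • (fun j => ((w i j : ℚ)))})
    (hfull : (interior C).Nonempty)
    (hpointed : ∀ x ∈ C, -x ∈ C → x = 0)
    (u : Fin (n + 1) → ℤ)
    (hu : (fun j => (u j : ℚ)) ∈ interior C)
    (hGor : ∀ x : Fin (n + 1) → ℤ,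
      ((fun j => (x j : ℚ)) ∈ interior C ↔
        (fun j => ((x j - u j : ℤ) : ℚ)) ∈ C)) :
    ∃ lam : Fin s → ℚ, (∀ i, 0 ≤ lam i ∧ lam i ≤ 1) ∧
      (fun j => (u j : ℚ)) = ∑ i, lam i • (fun j => (w i j : ℚ)) ∧
      LinearIndependent ℚ
        (fun i : {i : Fin s // lam i ≠ 0} => (fun j => (w i.1 j : ℚ))) :=
  stmt_6_general w hprim C hC hpointed u hu hGor
end

section
/- Let C ⊂ ℚ^{n+1} be a simplicial full-dimensional pointed rational cone with primitive ray generators w_1, …, w_{n+1}, and suppose C is Gorenstein with Gorenstein point u (i.e., C° ∩ ℤ^{n+1} = u + (C ∩ ℤ^{n+1})). Then u = Σ λ_i w_i with 0 < λ_i ≤ 1 for all i and Σ λ_i < n+1. -/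
/-!
In the basis `w` of `ℚ^{n+1}` the cone `C` is the nonnegative orthant, so its interior consists of the
points with positive coordinates; in particular the Gorenstein point `u` (for which `u - u = 0 ∈ C`) has
coordinates `λ_i > 0`. If some `λ_j > 1`, the lattice point `u - w_j + ∑_{i ≠ j} w_i` still has positive
coordinates, hence lies in `C°`, although its difference with `u` has `j`-th coordinate `-1`, contradicting
`C° ∩ ℤ^{n+1} = u + (C ∩ ℤ^{n+1})`.
-/

open Finset

theorem interior_setOf_forall_le {ι α : Type*} [Finite ι] [TopologicalSpace α] [LinearOrder α]
    [OrderTopology α] [DenselyOrdered α] [NoMinOrder α] (a : α) :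
    interior {t : ι → α | ∀ i, a ≤ t i} = {t | ∀ i, a < t i} := by
  have h := interior_pi_set (I := Set.univ) Set.finite_univ (s := fun _ : ι => Set.Ici a)
  simp only [interior_Ici] at h
  convert h using 2 <;> ext <;> simp only [Set.mem_univ_pi, Set.mem_Ici, Set.mem_Ioi, Set.mem_ofPred_eq]

namespace Module.Basis

variable {ι : Type*} [Fintype ι]

theorem exists_nonneg_sum_eq_iff {R M : Type*} [Semiring R] [PartialOrder R] [AddCommMonoid M]
    [Module R M] (b : Basis ι R M) (x : M) :
    (∃ t : ι → R, (∀ i, 0 ≤ t i) ∧ x = ∑ i, t i • b i) ↔ ∀ i, 0 ≤ b.repr x i := by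
  constructor
  · rintro ⟨t, ht, rfl⟩ i
    simpa only [b.repr_sum_self] using ht i
  · exact fun hx => ⟨fun i => b.repr x i, hx, (b.sum_repr x).symm⟩

theorem interior_setOf_repr_nonneg {K κ : Type*} [Fintype κ] [Field K] [LinearOrder K]
    [IsStrictOrderedRing K] [TopologicalSpace K] [OrderTopology K] (b : Basis ι K (κ → K)) :
    interior {x | ∀ i, 0 ≤ b.repr x i} = {x | ∀ i, 0 < b.repr x i} := by
  let e : (κ → K) ≃ₜ (ι → K) :=
    { toEquiv := b.equivFun.toEquiv
      continuous_toFun := LinearMap.continuous_on_pi b.equivFun.toLinearMap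
      continuous_invFun := LinearMap.continuous_on_pi b.equivFun.symm.toLinearMap }
  change interior (e ⁻¹' {t | ∀ i, 0 ≤ t i}) = e ⁻¹' {t | ∀ i, 0 < t i}
  rw [← Homeomorph.preimage_interior, interior_setOf_forall_le]

/-- `hGor` says `C° ∩ L = u + (C ∩ L)` for the cone `C` spanned by `b`, read in the coordinates of `b`. -/
theorem repr_mem_Ioc_of_gorenstein {R M : Type*} [CommRing R] [LinearOrder R] [IsStrictOrderedRing R]
    [AddCommGroup M] [Module R M] (b : Basis ι R M) (L : AddSubgroup M) (hbL : ∀ i, b i ∈ L)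
    {u : M} (huL : u ∈ L)
    (hGor : ∀ x ∈ L, (∀ i, 0 < b.repr x i) ↔ ∀ i, 0 ≤ b.repr (x - u) i) (i : ι) :
    b.repr u i ∈ Set.Ioc 0 1 := by
  classical
  have hpos : ∀ i, 0 < b.repr u i := (hGor u huL).2 (by simp)
  refine ⟨hpos i, not_lt.1 fun hgt => ?_⟩
  set d := ∑ k, ((if k = i then -1 else 1 : ℤ) : R) • b k
  have hdL : d ∈ L := L.sum_mem fun k _ => by
    rw [Int.cast_smul_eq_zsmul]
    exact L.zsmul_mem (hbL k) _
  have hd : ∀ k, b.repr d k = if k = i then -1 else 1 := fun k => by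
    rw [b.repr_sum_self]
    push_cast
    rfl
  have hint : ∀ k, 0 < b.repr (u + d) k := by
    intro k
    rw [map_add, Finsupp.add_apply, hd]
    split_ifs with hk
    · subst hk; linarith
    · linarith [hpos k]
  have hdi := (hGor (u + d) (L.add_mem huL hdL)).1 hint i
  rw [add_sub_cancel_left, hd, if_pos rfl] at hdi
  norm_num at hdi

end Module.Basis

theorem stmt_8_general {n : ℕ} (w : Fin (n + 1) → (Fin (n + 1) → ℤ))
    (hsimp : LinearIndependent ℚ (fun i => (fun j => (w i j : ℚ))))
    (C : Set (Fin (n + 1) → ℚ))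
    (hC : C = {x | ∃ t : Fin (n + 1) → ℚ, (∀ i, 0 ≤ t i) ∧
        x = ∑ i, t i • (fun j => ((w i j : ℚ)))})
    (u : Fin (n + 1) → ℤ)
    (hGor : ∀ x : Fin (n + 1) → ℤ,
      ((fun j => (x j : ℚ)) ∈ interior C ↔
        (fun j => ((x j - u j : ℤ) : ℚ)) ∈ C)) :
    ∃ lam : Fin (n + 1) → ℚ,
      (∀ i, 0 < lam i ∧ lam i ≤ 1) ∧
      (fun j => (u j : ℚ)) = ∑ i, lam i • (fun j => (w i j : ℚ)) ∧
      (∑ i, lam i) ≤ n + 1 ∧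
      ((∑ i, lam i) = n + 1 ↔ ∀ i, lam i = 1) := by
  let b := basisOfLinearIndependentOfCardEqFinrank hsimp (by simp)
  have hb : ∀ i, b i = fun j => (w i j : ℚ) := congrFun (coe_basisOfLinearIndependentOfCardEqFinrank _ _)
  have hCb : C = {x | ∀ i, 0 ≤ b.repr x i} := by
    ext x
    rw [hC, Set.mem_ofPred_eq, Set.mem_ofPred_eq, ← b.exists_nonneg_sum_eq_iff]
    simp only [hb]
  let L := ((Int.castAddHom ℚ).compLeft (Fin (n + 1))).range
  have hlam := b.repr_mem_Ioc_of_gorenstein L (fun i => ⟨w i, by rw [hb]; rfl⟩) ⟨u, rfl⟩ <| by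
    rintro _ ⟨x, rfl⟩
    have h := hGor x
    rw [hCb, b.interior_setOf_repr_nonneg] at h
    push_cast at h
    exact h
  have hle : ∀ i, b.repr (fun j => (u j : ℚ)) i ≤ 1 := fun i => (hlam i).2
  refine ⟨b.repr (fun j => (u j : ℚ)), hlam, ?_, ?_, ?_⟩
  · conv_lhs => rw [← b.sum_repr (fun j => (u j : ℚ))]
    simp only [hb]
  · simpa using sum_le_sum fun i (_ : i ∈ univ) => hle i
  · have hcard : ((n : ℚ) + 1) = ∑ _i : Fin (n + 1), (1 : ℚ) := by simp
    rw [hcard, sum_eq_sum_iff_of_le fun i _ => hle i]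
    simp

/-- Let `C ⊆ ℚ^{n+1}` be a simplicial full-dimensional pointed
rational cone with primitive ray generators `w_1, …, w_{n+1}` and Gorenstein
point `u` (i.e. `C° ∩ ℤ^{n+1} = u + (C ∩ ℤ^{n+1})`).  Then `u = ∑ λ_i w_i` with
`0 < λ_i ≤ 1` for all `i`, `∑ λ_i ≤ n+1`, and `∑ λ_i = n+1` if and only if all
`λ_i = 1`. -/
theorem stmt_8 {n : ℕ} (w : Fin (n + 1) → (Fin (n + 1) → ℤ))
    (hprim : ∀ i, Finset.univ.gcd (fun j => w i j) = 1)
    (hsimp : LinearIndependent ℚ (fun i => (fun j => (w i j : ℚ))))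
    (C : Set (Fin (n + 1) → ℚ))
    (hC : C = {x | ∃ t : Fin (n + 1) → ℚ, (∀ i, 0 ≤ t i) ∧
        x = ∑ i, t i • (fun j => ((w i j : ℚ)))})
    (u : Fin (n + 1) → ℤ)
    (hGor : ∀ x : Fin (n + 1) → ℤ,
      ((fun j => (x j : ℚ)) ∈ interior C ↔
        (fun j => ((x j - u j : ℤ) : ℚ)) ∈ C)) :
    ∃ lam : Fin (n + 1) → ℚ,
      (∀ i, 0 < lam i ∧ lam i ≤ 1) ∧
      (fun j => (u j : ℚ)) = ∑ i, lam i • (fun j => (w i j : ℚ)) ∧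
      (∑ i, lam i) ≤ n + 1 ∧
      ((∑ i, lam i) = n + 1 ↔ ∀ i, lam i = 1) :=
  stmt_8_general w hsimp C hC u hGor
end
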